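/- Let K be a field, let E₁ and E₂ be directed graphs with free path groupoids G₁ = G(E₁) and G₂ = G(E₂), and suppose there exists a groupoid homomorphism h : Arr(G₁) → Arr(G₂) whose restriction to W₁ := W(E₁) is injective and which satisfies h(W₁) = W₂ := W(E₂). Then there exists a K-algebra isomorphism φ : L_K(E₁) → L_K(E₂) preserving the generators, in the following sense: for every vertex v of E₁, φ(v) = h(v), where h(v) is the vertex of E₂ with h(𝟙_v) = 𝟙_{h(v)}; and for every edge e of E₁, φ(e) = f and φ(e*) = f*, where f is an edge of E₂ with ⟦f⟧ = h(⟦e⟧). -/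

import Mathlib

open CategoryTheory

universe u v u' v'

/-- The set of arrows of a groupoid. -/
abbrev Arr (C : Type u) [Groupoid.{v} C] : Type (max u v) := Σ (x y : C), x ⟶ y

/-- Two arrows `g₁ : x ⟶ y` and `g₂ : z ⟶ w` are composable if `y = z`. -/
def Arr.Composable {C : Type u} [Groupoid.{v} C] (g₁ g₂ : Arr C) : Prop := g₁.2.1 = g₂.1

/-- Composition of composable arrows. -/
def Arr.comp {C : Type u} [Groupoid.{v} C] (g₁ g₂ : Arr C) (h : g₁.Composable g₂) : Arr C :=
  ⟨g₁.1, g₂.2.1, g₁.2.2 ≫ eqToHom h ≫ g₂.2.2⟩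

/-- The identity arrow at an object. -/
def idArr {C : Type u} [Groupoid.{v} C] (x : C) : Arr C := ⟨x, x, 𝟙 x⟩

/-- Inverse of an arrow. -/
def Arr.inv {C : Type u} [Groupoid.{v} C] (g : Arr C) : Arr C :=
  ⟨g.2.1, g.1, Groupoid.inv g.2.2⟩

/-- A groupoid homomorphism, as a map on arrows preserving composability and composition. -/
def IsGroupoidHom {C : Type u} {D : Type u'} [Groupoid.{v} C] [Groupoid.{v'} D]
    (h : Arr C → Arr D) : Prop :=
  ∀ g₁ g₂ : Arr C, ∀ hc : g₁.Composable g₂,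
    ∃ hc' : (h g₁).Composable (h g₂), h (g₁.comp g₂ hc) = (h g₁).comp (h g₂) hc'

/-- The arrow of the free groupoid associated to a path in the quiver `V`;
this is the image of `p` under the canonical functor `Paths V ⥤ FreeGroupoid V`
extending the inclusion of `V`. -/
def pathArrow (V : Type u) [Quiver.{v} V] {x y : V} (p : Quiver.Path x y) :
    Arr (Quiver.FreeGroupoid V) :=
  ⟨(Quiver.FreeGroupoid.of V).obj x, (Quiver.FreeGroupoid.of V).obj y,
    composePath ((Quiver.FreeGroupoid.of V).mapPath p)⟩

/-- The set `W(E)` of arrows of `FreeGroupoid V` that are images of finite paths of `V`. -/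
def WSet (V : Type u) [Quiver.{v} V] : Set (Arr (Quiver.FreeGroupoid V)) :=
  {a | ∃ (x y : V) (p : Quiver.Path x y), a = pathArrow V p}

/-- A directed graph `E = (E⁰, E¹, s, r)`. -/
structure DirGraph : Type 1 where
  V : Type
  Edge : Type
  src : Edge → V
  rng : Edge → V

/-- The quiver structure on the vertices of a directed graph: an arrow `x ⟶ y` is an edge
with source `x` and range `y`. -/
instance DirGraph.quiver (G : DirGraph) : Quiver.{0} G.V :=
  ⟨fun x y => {e : G.Edge // G.src e = x ∧ G.rng e = y}⟩

/-- The arrow of the free path groupoid of `G` determined by an edge `e` of `G`. -/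
def DirGraph.edgeArrow (G : DirGraph) (e : G.Edge) : Arr (Quiver.FreeGroupoid G.V) :=
  pathArrow G.V (Quiver.Hom.toPath (show G.src e ⟶ G.rng e from ⟨e, rfl, rfl⟩))

variable (K : Type) [Field K]

/-- The generating relations of the Leavitt path algebra of the graph `G`, inside the free
`K`-algebra on the generators `E⁰ ⊕ E¹ ⊕ (E¹)*`. -/
inductive LeavittRel (G : DirGraph) :
    FreeAlgebra K (G.V ⊕ G.Edge ⊕ G.Edge) → FreeAlgebra K (G.V ⊕ G.Edge ⊕ G.Edge) → Prop
  | vertex_idem (v : G.V) :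
      LeavittRel G (FreeAlgebra.ι K (Sum.inl v) * FreeAlgebra.ι K (Sum.inl v))
        (FreeAlgebra.ι K (Sum.inl v))
  | vertex_orth (v w : G.V) (hvw : v ≠ w) :
      LeavittRel G (FreeAlgebra.ι K (Sum.inl v) * FreeAlgebra.ι K (Sum.inl w)) 0
  | src_edge (e : G.Edge) :
      LeavittRel G (FreeAlgebra.ι K (Sum.inl (G.src e)) * FreeAlgebra.ι K (Sum.inr (Sum.inl e)))
        (FreeAlgebra.ι K (Sum.inr (Sum.inl e)))
  | edge_rng (e : G.Edge) :
      LeavittRel G (FreeAlgebra.ι K (Sum.inr (Sum.inl e)) * FreeAlgebra.ι K (Sum.inl (G.rng e)))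
        (FreeAlgebra.ι K (Sum.inr (Sum.inl e)))
  | rng_star (e : G.Edge) :
      LeavittRel G (FreeAlgebra.ι K (Sum.inl (G.rng e)) * FreeAlgebra.ι K (Sum.inr (Sum.inr e)))
        (FreeAlgebra.ι K (Sum.inr (Sum.inr e)))
  | star_src (e : G.Edge) :
      LeavittRel G (FreeAlgebra.ι K (Sum.inr (Sum.inr e)) * FreeAlgebra.ι K (Sum.inl (G.src e)))
        (FreeAlgebra.ι K (Sum.inr (Sum.inr e)))
  | star_edge_same (e : G.Edge) :
      LeavittRel G (FreeAlgebra.ι K (Sum.inr (Sum.inr e)) * FreeAlgebra.ι K (Sum.inr (Sum.inl e)))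
        (FreeAlgebra.ι K (Sum.inl (G.rng e)))
  | star_edge_orth (e f : G.Edge) (hef : e ≠ f) :
      LeavittRel G (FreeAlgebra.ι K (Sum.inr (Sum.inr e)) * FreeAlgebra.ι K (Sum.inr (Sum.inl f)))
        0
  | cuntz_krieger (v : G.V) (hfin : {e : G.Edge | G.src e = v}.Finite)
      (hne : {e : G.Edge | G.src e = v}.Nonempty) :
      LeavittRel G (FreeAlgebra.ι K (Sum.inl v))
        (∑ e ∈ hfin.toFinset,
          FreeAlgebra.ι K (Sum.inr (Sum.inl e)) * FreeAlgebra.ι K (Sum.inr (Sum.inr e)))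

/-- The Leavitt path algebra `L_K(G)` of a directed graph `G` over the field `K`. -/
abbrev LeavittPathAlgebra (G : DirGraph) := RingQuot (LeavittRel K G)

/-- The generator of `L_K(G)` corresponding to a vertex `v ∈ E⁰`. -/
def vertexGen (G : DirGraph) (v : G.V) : LeavittPathAlgebra K G :=
  RingQuot.mkAlgHom K (LeavittRel K G) (FreeAlgebra.ι K (Sum.inl v))

/-- The generator of `L_K(G)` corresponding to an edge `e ∈ E¹`. -/
def edgeGen (G : DirGraph) (e : G.Edge) : LeavittPathAlgebra K G :=
  RingQuot.mkAlgHom K (LeavittRel K G) (FreeAlgebra.ι K (Sum.inr (Sum.inl e)))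

/-- The generator of `L_K(G)` corresponding to a ghost edge `e* ∈ (E¹)*`. -/
def starGen (G : DirGraph) (e : G.Edge) : LeavittPathAlgebra K G :=
  RingQuot.mkAlgHom K (LeavittRel K G) (FreeAlgebra.ι K (Sum.inr (Sum.inr e)))

/-!
A groupoid homomorphism `h` that is injective on `W₁` with `h(W₁) = W₂` preserves identities and
reflects composability, hence restricts to bijections between the identities of `W₁` and `W₂` and
between their irreducible elements: the non-identities that admit no factorisation into two
non-identities of `W`. In a free groupoid the length of a path is an invariant of its arrow (read
off by the functor to `ℤ` sending every edge to `1`) and adds up under composition, so the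
irreducible elements of `W(E)` are exactly the edges of `E`. Thus `h` induces an isomorphism of
graphs `E₁ ≅ E₂`, and relabelling the generators along it respects the Leavitt relations.
-/

lemma Set.BijOn.exists_equiv_apply_eq {α β γ δ : Type*} {f : γ → δ} {i : α → γ} {j : β → δ}
    (hi : Function.Injective i) (hj : Function.Injective j)
    (hf : Set.BijOn f (Set.range i) (Set.range j)) : ∃ e : α ≃ β, ∀ a, f (i a) = j (e a) :=
  ⟨(Equiv.ofInjective i hi).trans ((hf.equiv f).trans (Equiv.ofInjective j hj).symm),
    fun a => (Equiv.apply_ofInjective_symm hj (hf.equiv f ⟨i a, a, rfl⟩)).symm⟩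

lemma CategoryTheory.Functor.map_composePath {C : Type u} [Category.{v} C] {D : Type u'}
    [Category.{v'} D] (F : C ⥤ D) {x y : C} (p : Quiver.Path x y) :
    F.map (composePath p) = composePath (F.toPrefunctor.mapPath p) := by
  induction p with
  | nil => exact F.map_id _
  | cons p e ih => rw [composePath_cons, F.map_comp, ih]; rfl

namespace Arr

variable {C : Type u} [Groupoid.{v} C]

def IsId (a : Arr C) : Prop := ∃ x, a = idArr x

lemma isId_idArr (x : C) : (idArr x).IsId := ⟨x, rfl⟩

def IsIrreducibleIn (W : Set (Arr C)) (a : Arr C) : Prop :=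
  a ∈ W ∧ ¬ a.IsId ∧
    ∀ b ∈ W, ∀ c ∈ W, ∀ hbc : b.Composable c, b.comp c hbc = a → b.IsId ∨ c.IsId

lemma idArr_comp_idArr (x : C) : (idArr x).comp (idArr x) rfl = idArr x := by
  simp [comp, idArr]

end Arr

lemma idArr_injective {C : Type u} [Groupoid.{v} C] : Function.Injective (idArr : C → Arr C) :=
  fun _ _ h => congrArg Sigma.fst h

namespace IsGroupoidHom

variable {C : Type u} {D : Type u'} [Groupoid.{v} C] [Groupoid.{v'} D] {h : Arr C → Arr D}

lemma map_idArr (hh : IsGroupoidHom h) (x : C) : h (idArr x) = idArr (h (idArr x)).1 := by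
  obtain ⟨hc, heq⟩ := hh (idArr x) (idArr x) rfl
  rw [Arr.idArr_comp_idArr] at heq
  generalize h (idArr x) = g at hc heq ⊢
  obtain ⟨a, b, γ⟩ := g
  obtain rfl : b = a := hc
  have hγ : γ ≫ 𝟙 _ = γ ≫ γ := by simpa [Arr.comp] using heq
  rw [cancel_epi] at hγ
  rw [← hγ]
  rfl

lemma map_isId (hh : IsGroupoidHom h) {a : Arr C} (ha : a.IsId) : (h a).IsId := by
  obtain ⟨x, rfl⟩ := ha
  exact ⟨_, hh.map_idArr x⟩

lemma map_idArr_fst (hh : IsGroupoidHom h) (a : Arr C) : h (idArr a.1) = idArr (h a).1 := by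
  obtain ⟨hc, -⟩ := hh (idArr a.1) a rfl
  rw [hh.map_idArr] at hc ⊢
  exact congrArg idArr hc

lemma map_idArr_snd (hh : IsGroupoidHom h) (a : Arr C) : h (idArr a.2.1) = idArr (h a).2.1 := by
  obtain ⟨hc, -⟩ := hh a (idArr a.2.1) rfl
  rw [hh.map_idArr] at hc ⊢
  exact congrArg idArr hc.symm

variable {W₁ : Set (Arr C)} {W₂ : Set (Arr D)}

lemma isId_of_map_isId (hh : IsGroupoidHom h) (hinj : Set.InjOn h W₁)
    (hid : ∀ x, idArr x ∈ W₁) {a : Arr C} (ha : a ∈ W₁) (hida : (h a).IsId) : a.IsId := by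
  obtain ⟨y, hy⟩ := hida
  refine ⟨a.2.1, (hinj (hid _) ha ?_).symm⟩
  rw [hh.map_idArr_snd, hy]
  rfl

lemma composable_of_map (hh : IsGroupoidHom h) (hinj : Set.InjOn h W₁)
    (hid : ∀ x, idArr x ∈ W₁) {a b : Arr C} (hab : (h a).Composable (h b)) : a.Composable b :=
  idArr_injective <| hinj (hid _) (hid _) <| by
    rw [hh.map_idArr_snd, hh.map_idArr_fst]
    exact congrArg idArr hab

lemma bijOn_isId (hh : IsGroupoidHom h) (hinj : Set.InjOn h W₁) (himg : h '' W₁ = W₂)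
    (hid₁ : ∀ x, idArr x ∈ W₁) (hid₂ : ∀ y, idArr y ∈ W₂) :
    Set.BijOn h {a | a.IsId} {b | b.IsId} := by
  refine ⟨fun a ha => hh.map_isId ha, hinj.mono ?_, ?_⟩
  · rintro _ ⟨x, rfl⟩
    exact hid₁ x
  · rintro _ ⟨y, rfl⟩
    obtain ⟨a, ha, hay⟩ := himg.symm ▸ hid₂ y
    exact ⟨a, hh.isId_of_map_isId hinj hid₁ ha (hay ▸ Arr.isId_idArr y), hay⟩

lemma isIrreducibleIn_map_iff (hh : IsGroupoidHom h) (hinj : Set.InjOn h W₁)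
    (himg : h '' W₁ = W₂) (hid : ∀ x, idArr x ∈ W₁)
    (hcomp : ∀ a ∈ W₁, ∀ b ∈ W₁, ∀ hab : a.Composable b, a.comp b hab ∈ W₁)
    {a : Arr C} (ha : a ∈ W₁) : (h a).IsIrreducibleIn W₂ ↔ a.IsIrreducibleIn W₁ := by
  constructor
  · rintro ⟨-, hnid, hirr⟩
    refine ⟨ha, fun hida => hnid (hh.map_isId hida), fun b hb c hc hbc hbca => ?_⟩
    obtain ⟨hbc', hmap⟩ := hh b c hbc
    rw [hbca] at hmap
    have := hirr (h b) (himg ▸ Set.mem_image_of_mem h hb) (h c)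
      (himg ▸ Set.mem_image_of_mem h hc) hbc' hmap.symm
    exact this.imp (hh.isId_of_map_isId hinj hid hb) (hh.isId_of_map_isId hinj hid hc)
  · rintro ⟨-, hnid, hirr⟩
    refine ⟨himg ▸ Set.mem_image_of_mem h ha,
      fun hida => hnid (hh.isId_of_map_isId hinj hid ha hida), ?_⟩
    rw [← himg]
    rintro _ ⟨b, hb, rfl⟩ _ ⟨c, hc, rfl⟩ hbc' hbca
    have hbc := hh.composable_of_map hinj hid hbc'
    obtain ⟨_, hmap⟩ := hh b c hbc
    have hbca' : b.comp c hbc = a := hinj (hcomp b hb c hc hbc) ha (hmap.trans hbca)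
    exact (hirr b hb c hc hbc hbca').imp hh.map_isId hh.map_isId

lemma bijOn_isIrreducibleIn (hh : IsGroupoidHom h) (hinj : Set.InjOn h W₁)
    (himg : h '' W₁ = W₂) (hid : ∀ x, idArr x ∈ W₁)
    (hcomp : ∀ a ∈ W₁, ∀ b ∈ W₁, ∀ hab : a.Composable b, a.comp b hab ∈ W₁) :
    Set.BijOn h {a | a.IsIrreducibleIn W₁} {b | b.IsIrreducibleIn W₂} := by
  refine ⟨fun a ha => (hh.isIrreducibleIn_map_iff hinj himg hid hcomp ha.1).2 ha,
    hinj.mono fun a ha => ha.1, ?_⟩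
  intro b hb
  obtain ⟨a, ha, rfl⟩ := himg.symm ▸ hb.1
  exact ⟨a, (hh.isIrreducibleIn_map_iff hinj himg hid hcomp ha).1 hb, rfl⟩

end IsGroupoidHom

namespace Quiver.FreeGroupoid

variable {V : Type u} [Quiver.{v} V]

lemma of_obj_injective : Function.Injective (Quiver.FreeGroupoid.of V).obj :=
  fun _ _ h => congrArg (CategoryTheory.Quotient.as (r := redStep)) h

lemma of_obj_surjective : Function.Surjective (Quiver.FreeGroupoid.of V).obj :=
  fun z => ⟨(z.as : V), rfl⟩

end Quiver.FreeGroupoid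

section Label

variable {V : Type u} [Quiver.{v} V] {M : Type u'} [Group M]

def arrowLabel (φ : V ⥤q SingleObj M) (a : Arr (Quiver.FreeGroupoid V)) : M :=
  (Quiver.FreeGroupoid.lift φ).map a.2.2

lemma arrowLabel_pathArrow (φ : V ⥤q SingleObj M) {x y : V} (p : Quiver.Path x y) :
    arrowLabel φ (pathArrow V p) = composePath (φ.mapPath p) := by
  rw [arrowLabel, pathArrow, Functor.map_composePath, ← Prefunctor.mapPath_comp_apply,
    Quiver.FreeGroupoid.lift_spec]

end Label

def lengthPrefunctor (V : Type u) [Quiver.{v} V] : V ⥤q SingleObj (Multiplicative ℤ) where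
  obj _ := SingleObj.star _
  map _ := Multiplicative.ofAdd 1

section Length

variable {V : Type u} [Quiver.{v} V]

lemma arrowLabel_length_pathArrow {x y : V} (p : Quiver.Path x y) :
    arrowLabel (lengthPrefunctor V) (pathArrow V p) = Multiplicative.ofAdd (p.length : ℤ) := by
  rw [arrowLabel_pathArrow]
  induction p with
  | nil => rfl
  | cons p e ih =>
    rw [Prefunctor.mapPath_cons, composePath_cons, SingleObj.comp_as_mul, ih,
      Quiver.Path.length_cons]
    push_cast
    rw [add_comm, ofAdd_add]
    rfl

lemma Quiver.Path.length_eq_of_pathArrow_eq {x y x' y' : V} {p : Quiver.Path x y}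
    {q : Quiver.Path x' y'} (h : pathArrow V p = pathArrow V q) : p.length = q.length := by
  have := congrArg (arrowLabel (lengthPrefunctor V)) h
  rw [arrowLabel_length_pathArrow, arrowLabel_length_pathArrow] at this
  exact_mod_cast Multiplicative.ofAdd.injective this

end Length

section PathArrow

variable {V : Type u} [Quiver.{v} V]

lemma pathArrow_comp {x y z : V} (p : Quiver.Path x y) (q : Quiver.Path y z) :
    (pathArrow V p).comp (pathArrow V q) rfl = pathArrow V (p.comp q) := by
  simp [pathArrow, Arr.comp, Prefunctor.mapPath_comp, composePath_comp]

lemma pathArrow_nil (x : V) :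
    pathArrow V (Quiver.Path.nil : Quiver.Path x x) = idArr ((Quiver.FreeGroupoid.of V).obj x) :=
  rfl

lemma isId_pathArrow_iff {x y : V} (p : Quiver.Path x y) :
    (pathArrow V p).IsId ↔ p.length = 0 := by
  constructor
  · rintro ⟨z, hz⟩
    obtain ⟨x', rfl⟩ := Quiver.FreeGroupoid.of_obj_surjective z
    rw [← pathArrow_nil] at hz
    exact Quiver.Path.length_eq_of_pathArrow_eq hz
  · intro hp
    obtain rfl := Quiver.Path.eq_of_length_zero p hp
    obtain rfl := Quiver.Path.eq_nil_of_length_zero p hp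
    exact ⟨_, pathArrow_nil x⟩

lemma idArr_mem_WSet (z : Quiver.FreeGroupoid V) : idArr z ∈ WSet V := by
  obtain ⟨x, rfl⟩ := Quiver.FreeGroupoid.of_obj_surjective z
  exact ⟨x, x, .nil, rfl⟩

lemma exists_pathArrow_comp_eq {x₁ y₁ x₂ y₂ : V} (p : Quiver.Path x₁ y₁) (q : Quiver.Path x₂ y₂)
    (hpq : (pathArrow V p).Composable (pathArrow V q)) :
    ∃ r : Quiver.Path x₁ y₂, (pathArrow V p).comp (pathArrow V q) hpq = pathArrow V r ∧
      r.length = p.length + q.length := by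
  obtain rfl : y₁ = x₂ := Quiver.FreeGroupoid.of_obj_injective hpq
  exact ⟨p.comp q, pathArrow_comp p q, Quiver.Path.length_comp p q⟩

lemma comp_mem_WSet {a b : Arr (Quiver.FreeGroupoid V)} (ha : a ∈ WSet V) (hb : b ∈ WSet V)
    (hab : a.Composable b) : a.comp b hab ∈ WSet V := by
  obtain ⟨x₁, y₁, p, rfl⟩ := ha
  obtain ⟨x₂, y₂, q, rfl⟩ := hb
  obtain ⟨r, hr, -⟩ := exists_pathArrow_comp_eq p q hab
  exact ⟨_, _, r, hr⟩

lemma isIrreducibleIn_pathArrow_iff {x y : V} (p : Quiver.Path x y) :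
    (pathArrow V p).IsIrreducibleIn (WSet V) ↔ p.length = 1 := by
  constructor
  · rintro ⟨-, hnid, hirr⟩
    rw [isId_pathArrow_iff] at hnid
    obtain ⟨z, p', e, rfl⟩ := (Quiver.Path.length_ne_zero_iff_eq_cons p).1 hnid
    have hsplit :=
      hirr _ ⟨_, _, p', rfl⟩ _ ⟨_, _, e.toPath, rfl⟩ rfl (pathArrow_comp p' e.toPath)
    rw [isId_pathArrow_iff, isId_pathArrow_iff, Quiver.Path.length_toPath] at hsplit
    simpa using hsplit
  · intro hp
    refine ⟨⟨_, _, p, rfl⟩, by rw [isId_pathArrow_iff, hp]; exact one_ne_zero, ?_⟩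
    rintro _ ⟨_, _, q, rfl⟩ _ ⟨_, _, r, rfl⟩ hqr hqrp
    obtain ⟨s, hs, hslen⟩ := exists_pathArrow_comp_eq q r hqr
    rw [hs] at hqrp
    rw [isId_pathArrow_iff, isId_pathArrow_iff]
    have := Quiver.Path.length_eq_of_pathArrow_eq hqrp
    omega

lemma isIrreducibleIn_WSet_iff (a : Arr (Quiver.FreeGroupoid V)) :
    a.IsIrreducibleIn (WSet V) ↔ ∃ (x y : V) (f : x ⟶ y), a = pathArrow V f.toPath := by
  constructor
  · intro ha
    obtain ⟨x, y, p, rfl⟩ := ha.1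
    obtain ⟨z, p', f, rfl⟩ := (Quiver.Path.length_ne_zero_iff_eq_cons p).1
      (by rw [(isIrreducibleIn_pathArrow_iff p).1 ha]; exact one_ne_zero)
    have hp' : p'.length = 0 := by simpa using (isIrreducibleIn_pathArrow_iff _).1 ha
    obtain rfl := Quiver.Path.eq_of_length_zero p' hp'
    obtain rfl := Quiver.Path.eq_nil_of_length_zero p' hp'
    exact ⟨_, _, f, rfl⟩
  · rintro ⟨x, y, f, rfl⟩
    exact (isIrreducibleIn_pathArrow_iff _).2 (Quiver.Path.length_toPath f)

end PathArrow

lemma range_idArr_of (V : Type u) [Quiver.{v} V] :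
    Set.range (fun x : V => idArr ((Quiver.FreeGroupoid.of V).obj x)) = {a | a.IsId} := by
  ext a
  constructor
  · rintro ⟨x, rfl⟩
    exact Arr.isId_idArr _
  · rintro ⟨z, rfl⟩
    obtain ⟨x, rfl⟩ := Quiver.FreeGroupoid.of_obj_surjective z
    exact ⟨x, rfl⟩

namespace DirGraph

variable (G : DirGraph)

lemma pathArrow_toPath {x y : G.V} (f : x ⟶ y) : pathArrow G.V f.toPath = G.edgeArrow f.1 := by
  obtain ⟨e, rfl, rfl⟩ := f
  rfl

def edgePrefunctor : G.V ⥤q SingleObj (FreeGroup G.Edge) where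
  obj _ := SingleObj.star _
  map f := FreeGroup.of f.1

lemma edgeArrow_injective : Function.Injective G.edgeArrow := by
  intro e f hef
  have := congrArg (arrowLabel G.edgePrefunctor) hef
  rw [edgeArrow, edgeArrow, arrowLabel_pathArrow, arrowLabel_pathArrow] at this
  exact FreeGroup.of_injective this

lemma range_edgeArrow : Set.range G.edgeArrow = {a | a.IsIrreducibleIn (WSet G.V)} := by
  ext a
  rw [Set.mem_ofPred_eq, isIrreducibleIn_WSet_iff]
  constructor
  · rintro ⟨e, rfl⟩
    exact ⟨_, _, _, rfl⟩
  · rintro ⟨x, y, f, rfl⟩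
    exact ⟨f.1, (G.pathArrow_toPath f).symm⟩

end DirGraph

structure DirGraph.Iso (G₁ G₂ : DirGraph) where
  vertexEquiv : G₁.V ≃ G₂.V
  edgeEquiv : G₁.Edge ≃ G₂.Edge
  src_edgeEquiv (e : G₁.Edge) : G₂.src (edgeEquiv e) = vertexEquiv (G₁.src e)
  rng_edgeEquiv (e : G₁.Edge) : G₂.rng (edgeEquiv e) = vertexEquiv (G₁.rng e)

namespace DirGraph.Iso

variable {G₁ G₂ : DirGraph}

@[simps]
def symm (Φ : G₁.Iso G₂) : G₂.Iso G₁ where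
  vertexEquiv := Φ.vertexEquiv.symm
  edgeEquiv := Φ.edgeEquiv.symm
  src_edgeEquiv f := by
    rw [Equiv.eq_symm_apply, ← Φ.src_edgeEquiv, Equiv.apply_symm_apply]
  rng_edgeEquiv f := by
    rw [Equiv.eq_symm_apply, ← Φ.rng_edgeEquiv, Equiv.apply_symm_apply]

lemma image_edgeEquiv_src (Φ : G₁.Iso G₂) (v : G₁.V) :
    Φ.edgeEquiv '' {e | G₁.src e = v} = {f | G₂.src f = Φ.vertexEquiv v} := by
  ext f
  obtain ⟨e, rfl⟩ := Φ.edgeEquiv.surjective f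
  simp [Φ.src_edgeEquiv]

end DirGraph.Iso

namespace LeavittPathAlgebra

variable {G₁ G₂ : DirGraph}

def relabel (Φ : G₁.Iso G₂) :
    FreeAlgebra K (G₁.V ⊕ G₁.Edge ⊕ G₁.Edge) →ₐ[K] FreeAlgebra K (G₂.V ⊕ G₂.Edge ⊕ G₂.Edge) :=
  FreeAlgebra.lift K
    (FreeAlgebra.ι K ∘ Sum.map Φ.vertexEquiv (Sum.map Φ.edgeEquiv Φ.edgeEquiv))

lemma leavittRel_relabel (Φ : G₁.Iso G₂) {a b : FreeAlgebra K (G₁.V ⊕ G₁.Edge ⊕ G₁.Edge)}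
    (hab : LeavittRel K G₁ a b) : LeavittRel K G₂ (relabel K Φ a) (relabel K Φ b) := by
  induction hab with
  | vertex_idem v => simpa [relabel] using LeavittRel.vertex_idem (K := K) (Φ.vertexEquiv v)
  | vertex_orth v w hvw =>
    simpa [relabel] using LeavittRel.vertex_orth (K := K) _ _ (Φ.vertexEquiv.injective.ne hvw)
  | src_edge e =>
    simpa [relabel, Φ.src_edgeEquiv] using LeavittRel.src_edge (K := K) (Φ.edgeEquiv e)
  | edge_rng e =>
    simpa [relabel, Φ.rng_edgeEquiv] using LeavittRel.edge_rng (K := K) (Φ.edgeEquiv e)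
  | rng_star e =>
    simpa [relabel, Φ.rng_edgeEquiv] using LeavittRel.rng_star (K := K) (Φ.edgeEquiv e)
  | star_src e =>
    simpa [relabel, Φ.src_edgeEquiv] using LeavittRel.star_src (K := K) (Φ.edgeEquiv e)
  | star_edge_same e =>
    simpa [relabel, Φ.rng_edgeEquiv] using LeavittRel.star_edge_same (K := K) (Φ.edgeEquiv e)
  | star_edge_orth e f hef =>
    simpa [relabel] using LeavittRel.star_edge_orth (K := K) _ _ (Φ.edgeEquiv.injective.ne hef)
  | cuntz_krieger v hfin hne =>
    have hset := Φ.image_edgeEquiv_src v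
    have hfin₂ : {f | G₂.src f = Φ.vertexEquiv v}.Finite := hset ▸ hfin.image _
    have hne₂ : {f | G₂.src f = Φ.vertexEquiv v}.Nonempty := hset ▸ hne.image _
    convert LeavittRel.cuntz_krieger (K := K) _ hfin₂ hne₂ using 1
    · simp [relabel]
    · rw [map_sum]
      refine Finset.sum_equiv Φ.edgeEquiv (fun e => ?_) (fun e _ => by simp [relabel])
      simp [Φ.src_edgeEquiv]

def map (Φ : G₁.Iso G₂) : LeavittPathAlgebra K G₁ →ₐ[K] LeavittPathAlgebra K G₂ :=
  RingQuot.liftAlgHom K ⟨(RingQuot.mkAlgHom K (LeavittRel K G₂)).comp (relabel K Φ),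
    fun _ _ hab => RingQuot.mkAlgHom_rel K (leavittRel_relabel K Φ hab)⟩

@[simp] lemma map_vertexGen (Φ : G₁.Iso G₂) (v : G₁.V) :
    map K Φ (vertexGen K G₁ v) = vertexGen K G₂ (Φ.vertexEquiv v) := by
  simp [map, vertexGen, relabel]

@[simp] lemma map_edgeGen (Φ : G₁.Iso G₂) (e : G₁.Edge) :
    map K Φ (edgeGen K G₁ e) = edgeGen K G₂ (Φ.edgeEquiv e) := by
  simp [map, edgeGen, relabel]

@[simp] lemma map_starGen (Φ : G₁.Iso G₂) (e : G₁.Edge) :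
    map K Φ (starGen K G₁ e) = starGen K G₂ (Φ.edgeEquiv e) := by
  simp [map, starGen, relabel]

lemma hom_ext {G : DirGraph} {A : Type*} [Semiring A] [Algebra K A]
    {F F' : LeavittPathAlgebra K G →ₐ[K] A}
    (hv : ∀ v, F (vertexGen K G v) = F' (vertexGen K G v))
    (he : ∀ e, F (edgeGen K G e) = F' (edgeGen K G e))
    (hs : ∀ e, F (starGen K G e) = F' (starGen K G e)) : F = F' := by
  refine RingQuot.ringQuot_ext' (f := F) (g := F') _ (FreeAlgebra.hom_ext (funext ?_))
  rintro (v | e | e)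
  exacts [hv v, he e, hs e]

def equivOfIso (Φ : G₁.Iso G₂) : LeavittPathAlgebra K G₁ ≃ₐ[K] LeavittPathAlgebra K G₂ :=
  AlgEquiv.ofAlgHom (map K Φ) (map K Φ.symm) (hom_ext K (by simp) (by simp) (by simp))
    (hom_ext K (by simp) (by simp) (by simp))

lemma equivOfIso_apply (Φ : G₁.Iso G₂) (x : LeavittPathAlgebra K G₁) :
    equivOfIso K Φ x = map K Φ x :=
  rfl

end LeavittPathAlgebra

theorem DirGraph.exists_iso_of_groupoidHom {G₁ G₂ : DirGraph}
    {h : Arr (Quiver.FreeGroupoid G₁.V) → Arr (Quiver.FreeGroupoid G₂.V)} (hh : IsGroupoidHom h)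
    (hinj : Set.InjOn h (WSet G₁.V)) (himg : h '' WSet G₁.V = WSet G₂.V) :
    ∃ Φ : G₁.Iso G₂,
      (∀ v, h (idArr ((Quiver.FreeGroupoid.of G₁.V).obj v)) =
        idArr ((Quiver.FreeGroupoid.of G₂.V).obj (Φ.vertexEquiv v))) ∧
      ∀ e, h (G₁.edgeArrow e) = G₂.edgeArrow (Φ.edgeEquiv e) := by
  have hids := hh.bijOn_isId hinj himg idArr_mem_WSet idArr_mem_WSet
  rw [← range_idArr_of, ← range_idArr_of] at hids
  obtain ⟨σ, hσ⟩ := hids.exists_equiv_apply_eq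
    (idArr_injective.comp Quiver.FreeGroupoid.of_obj_injective)
    (idArr_injective.comp Quiver.FreeGroupoid.of_obj_injective)
  have hirr := hh.bijOn_isIrreducibleIn hinj himg idArr_mem_WSet
    fun _ ha _ hb => comp_mem_WSet ha hb
  rw [← G₁.range_edgeArrow, ← G₂.range_edgeArrow] at hirr
  obtain ⟨τ, hτ⟩ := hirr.exists_equiv_apply_eq G₁.edgeArrow_injective G₂.edgeArrow_injective
  have hends (e : G₁.Edge) :
      G₂.src (τ e) = σ (G₁.src e) ∧ G₂.rng (τ e) = σ (G₁.rng e) := by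
    have hsrc := hh.map_idArr_fst (G₁.edgeArrow e)
    have hrng := hh.map_idArr_snd (G₁.edgeArrow e)
    rw [hτ e] at hsrc hrng
    exact ⟨Quiver.FreeGroupoid.of_obj_injective (idArr_injective (hsrc.symm.trans (hσ _))),
      Quiver.FreeGroupoid.of_obj_injective (idArr_injective (hrng.symm.trans (hσ _)))⟩
  exact ⟨⟨σ, τ, fun e => (hends e).1, fun e => (hends e).2⟩, hσ, hτ⟩

open LeavittPathAlgebra in
/-- If there is a groupoid homomorphism `h` between the free path groupoids of `E₁` and `E₂`
which is injective on `W(E₁)` and maps `W(E₁)` onto `W(E₂)`, then there is a `K`-algebra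
isomorphism `L_K(E₁) ≅ L_K(E₂)` preserving the generators: it sends a vertex `v` to the
vertex `h(v)` (the vertex with `h(𝟙_v) = 𝟙_{h(v)}`), and an edge `e` (resp. `e*`) to the
edge `f` (resp. `f*`) with `⟦f⟧ = h(⟦e⟧)`. -/
theorem leavitt_iso_of_groupoidHom (G₁ G₂ : DirGraph)
    (h : Arr (Quiver.FreeGroupoid G₁.V) → Arr (Quiver.FreeGroupoid G₂.V)) (hhom : IsGroupoidHom h)
    (hinj : Set.InjOn h (WSet G₁.V)) (himg : h '' WSet G₁.V = WSet G₂.V) :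
    ∃ φ : LeavittPathAlgebra K G₁ ≃ₐ[K] LeavittPathAlgebra K G₂,
      (∀ (v : G₁.V) (w : G₂.V),
        h (idArr ((Quiver.FreeGroupoid.of G₁.V).obj v)) = idArr ((Quiver.FreeGroupoid.of G₂.V).obj w) →
          φ (vertexGen K G₁ v) = vertexGen K G₂ w) ∧
      (∀ (e : G₁.Edge) (f : G₂.Edge),
        h (G₁.edgeArrow e) = G₂.edgeArrow f →
          φ (edgeGen K G₁ e) = edgeGen K G₂ f ∧ φ (starGen K G₁ e) = starGen K G₂ f) := by
  obtain ⟨Φ, hΦv, hΦe⟩ := DirGraph.exists_iso_of_groupoidHom hhom hinj himg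
  refine ⟨equivOfIso K Φ, fun v w hvw => ?_, fun e f hef => ?_⟩
  · have hw : Φ.vertexEquiv v = w :=
      Quiver.FreeGroupoid.of_obj_injective (idArr_injective ((hΦv v).symm.trans hvw))
    rw [equivOfIso_apply, map_vertexGen, hw]
  · have hf : Φ.edgeEquiv e = f := G₂.edgeArrow_injective ((hΦe e).symm.trans hef)
    rw [equivOfIso_apply, equivOfIso_apply, map_edgeGen, map_starGen, hf]
    exact ⟨rfl, rfl⟩
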